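/- For a tripartite unit vector ψ with maximal product overlap Λ(ψ), one has Λ(ψ)⁴ = max over unit product vectors a⊗b⊗c of |⟨ψ|b⊗c⟩ ⊗ ⟨ψ|a⊗c⟩ ⊗ ⟨ψ|a⊗b⟩ applied to ψ|, where ⟨ψ|b⊗c⟩ ∈ H_A* etc. denote partial inner products. -/

import Mathlib

open scoped InnerProductSpace BigOperators ComplexConjugate

noncomputable section

variable {dA dB dC : ℕ}

/-- The elementary product tensor `a ⊗ b ⊗ c` in `H_A ⊗ H_B ⊗ H_C`. -/
def prodVec3 (a : EuclideanSpace ℂ (Fin dA)) (b : EuclideanSpace ℂ (Fin dB))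
    (c : EuclideanSpace ℂ (Fin dC)) :
    EuclideanSpace ℂ (Fin dA × Fin dB × Fin dC) :=
  WithLp.toLp 2 (fun p => a p.1 * b p.2.1 * c p.2.2)

/-- The scalar obtained by contracting `ψ` with the three covectors
`⟨ψ|b⊗c|` (on `H_A`), `⟨ψ|a⊗c|` (on `H_B`) and `⟨ψ|a⊗b|` (on `H_C`). -/
def tripleContraction (ψ : EuclideanSpace ℂ (Fin dA × Fin dB × Fin dC))
    (a : EuclideanSpace ℂ (Fin dA)) (b : EuclideanSpace ℂ (Fin dB))
    (c : EuclideanSpace ℂ (Fin dC)) : ℂ :=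
  ∑ i : Fin dA, ∑ j : Fin dB, ∑ l : Fin dC,
    (∑ j' : Fin dB, ∑ l' : Fin dC, conj (ψ (i, j', l')) * b j' * c l') *
    (∑ i' : Fin dA, ∑ l' : Fin dC, conj (ψ (i', j, l')) * a i' * c l') *
    (∑ i' : Fin dA, ∑ j' : Fin dB, conj (ψ (i', j', l)) * a i' * b j') *
    ψ (i, j, l)

lemma sum_rot3 {α β γ M : Type*} [Fintype α] [Fintype β] [Fintype γ] [AddCommMonoid M]
    (f : α → β → γ → M) :
    ∑ i : α, ∑ j : β, ∑ l : γ, f i j l = ∑ l : γ, ∑ i : α, ∑ j : β, f i j l := by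
  rw [show (∑ i : α, ∑ j : β, ∑ l : γ, f i j l) = ∑ i : α, ∑ l : γ, ∑ j : β, f i j l from
    Finset.sum_congr rfl fun i _ => Finset.sum_comm, Finset.sum_comm]

def vecA (ψ : EuclideanSpace ℂ (Fin dA × Fin dB × Fin dC))
    (b : EuclideanSpace ℂ (Fin dB)) (c : EuclideanSpace ℂ (Fin dC)) :
    EuclideanSpace ℂ (Fin dA) :=
  WithLp.toLp 2 (fun i => ∑ j : Fin dB, ∑ l : Fin dC, conj (b j) * conj (c l) * ψ (i, j, l))

def vecB (ψ : EuclideanSpace ℂ (Fin dA × Fin dB × Fin dC))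
    (a : EuclideanSpace ℂ (Fin dA)) (c : EuclideanSpace ℂ (Fin dC)) :
    EuclideanSpace ℂ (Fin dB) :=
  WithLp.toLp 2 (fun j => ∑ i : Fin dA, ∑ l : Fin dC, conj (a i) * conj (c l) * ψ (i, j, l))

def vecC (ψ : EuclideanSpace ℂ (Fin dA × Fin dB × Fin dC))
    (a : EuclideanSpace ℂ (Fin dA)) (b : EuclideanSpace ℂ (Fin dB)) :
    EuclideanSpace ℂ (Fin dC) :=
  WithLp.toLp 2 (fun l => ∑ i : Fin dA, ∑ j : Fin dB, conj (a i) * conj (b j) * ψ (i, j, l))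

lemma inner_prodVec3 (ψ : EuclideanSpace ℂ (Fin dA × Fin dB × Fin dC))
    (a : EuclideanSpace ℂ (Fin dA)) (b : EuclideanSpace ℂ (Fin dB))
    (c : EuclideanSpace ℂ (Fin dC)) :
    ⟪prodVec3 a b c, ψ⟫_ℂ =
      ∑ i : Fin dA, ∑ j : Fin dB, ∑ l : Fin dC,
        conj (a i) * conj (b j) * conj (c l) * ψ (i, j, l) := by
  simp only [PiLp.inner_apply, RCLike.inner_apply, prodVec3, PiLp.toLp_apply, Fintype.sum_prod_type, map_mul]
  exact Finset.sum_congr rfl fun i _ => Finset.sum_congr rfl fun j _ =>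
    Finset.sum_congr rfl fun l _ => mul_comm _ _

lemma inner_eq_inner_vecA (ψ : EuclideanSpace ℂ (Fin dA × Fin dB × Fin dC))
    (a : EuclideanSpace ℂ (Fin dA)) (b : EuclideanSpace ℂ (Fin dB))
    (c : EuclideanSpace ℂ (Fin dC)) :
    ⟪prodVec3 a b c, ψ⟫_ℂ = ⟪a, vecA ψ b c⟫_ℂ := by
  rw [inner_prodVec3]
  simp only [PiLp.inner_apply, RCLike.inner_apply, vecA, PiLp.toLp_apply, Finset.mul_sum, Finset.sum_mul]
  refine Finset.sum_congr rfl fun i _ => Finset.sum_congr rfl fun j _ =>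
    Finset.sum_congr rfl fun l _ => by ring

lemma inner_eq_inner_vecB (ψ : EuclideanSpace ℂ (Fin dA × Fin dB × Fin dC))
    (a : EuclideanSpace ℂ (Fin dA)) (b : EuclideanSpace ℂ (Fin dB))
    (c : EuclideanSpace ℂ (Fin dC)) :
    ⟪prodVec3 a b c, ψ⟫_ℂ = ⟪b, vecB ψ a c⟫_ℂ := by
  rw [inner_prodVec3]
  simp only [PiLp.inner_apply, RCLike.inner_apply, vecB, PiLp.toLp_apply, Finset.mul_sum, Finset.sum_mul]
  rw [Finset.sum_comm]
  refine Finset.sum_congr rfl fun j _ => Finset.sum_congr rfl fun i _ =>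
    Finset.sum_congr rfl fun l _ => by ring

lemma inner_eq_inner_vecC (ψ : EuclideanSpace ℂ (Fin dA × Fin dB × Fin dC))
    (a : EuclideanSpace ℂ (Fin dA)) (b : EuclideanSpace ℂ (Fin dB))
    (c : EuclideanSpace ℂ (Fin dC)) :
    ⟪prodVec3 a b c, ψ⟫_ℂ = ⟪c, vecC ψ a b⟫_ℂ := by
  rw [inner_prodVec3, sum_rot3]
  simp only [PiLp.inner_apply, RCLike.inner_apply, vecC, PiLp.toLp_apply, Finset.mul_sum, Finset.sum_mul]
  refine Finset.sum_congr rfl fun l _ => Finset.sum_congr rfl fun i _ =>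
    Finset.sum_congr rfl fun j _ => by ring

lemma tripleContraction_eq (ψ : EuclideanSpace ℂ (Fin dA × Fin dB × Fin dC))
    (a : EuclideanSpace ℂ (Fin dA)) (b : EuclideanSpace ℂ (Fin dB))
    (c : EuclideanSpace ℂ (Fin dC)) :
    tripleContraction ψ a b c = ⟪prodVec3 (vecA ψ b c) (vecB ψ a c) (vecC ψ a b), ψ⟫_ℂ := by
  have hA : ∀ i, conj (vecA ψ b c i) =
      ∑ j' : Fin dB, ∑ l' : Fin dC, conj (ψ (i, j', l')) * b j' * c l' := by
    intro i
    simp only [vecA, PiLp.toLp_apply, map_sum, map_mul, Complex.conj_conj]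
    exact Finset.sum_congr rfl fun j' _ => Finset.sum_congr rfl fun l' _ => by ring
  have hB : ∀ j, conj (vecB ψ a c j) =
      ∑ i' : Fin dA, ∑ l' : Fin dC, conj (ψ (i', j, l')) * a i' * c l' := by
    intro j
    simp only [vecB, PiLp.toLp_apply, map_sum, map_mul, Complex.conj_conj]
    exact Finset.sum_congr rfl fun i' _ => Finset.sum_congr rfl fun l' _ => by ring
  have hC : ∀ l, conj (vecC ψ a b l) =
      ∑ i' : Fin dA, ∑ j' : Fin dB, conj (ψ (i', j', l)) * a i' * b j' := by
    intro l
    simp only [vecC, PiLp.toLp_apply, map_sum, map_mul, Complex.conj_conj]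
    exact Finset.sum_congr rfl fun i' _ => Finset.sum_congr rfl fun j' _ => by ring
  rw [inner_prodVec3, tripleContraction]
  refine Finset.sum_congr rfl fun i _ => Finset.sum_congr rfl fun j _ =>
    Finset.sum_congr rfl fun l _ => ?_
  rw [← hA i, ← hB j, ← hC l]

lemma prodVec3_smul₁ (r : ℂ) (a : EuclideanSpace ℂ (Fin dA)) (b : EuclideanSpace ℂ (Fin dB))
    (c : EuclideanSpace ℂ (Fin dC)) : prodVec3 (r • a) b c = r • prodVec3 a b c := by
  ext p; simp [prodVec3, PiLp.smul_apply, smul_eq_mul]; ring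

lemma prodVec3_smul₂ (r : ℂ) (a : EuclideanSpace ℂ (Fin dA)) (b : EuclideanSpace ℂ (Fin dB))
    (c : EuclideanSpace ℂ (Fin dC)) : prodVec3 a (r • b) c = r • prodVec3 a b c := by
  ext p; simp [prodVec3, PiLp.smul_apply, smul_eq_mul]; ring

lemma prodVec3_smul₃ (r : ℂ) (a : EuclideanSpace ℂ (Fin dA)) (b : EuclideanSpace ℂ (Fin dB))
    (c : EuclideanSpace ℂ (Fin dC)) : prodVec3 a b (r • c) = r • prodVec3 a b c := by
  ext p; simp [prodVec3, PiLp.smul_apply, smul_eq_mul]; ring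

/-- If `Λ(ψ)` is the maximal product overlap of a tripartite unit vector `ψ`, then
`Λ(ψ)⁴` is the maximum over unit product vectors `a⊗b⊗c` of
`|⟨ψ|b⊗c⟩ ⊗ ⟨ψ|a⊗c⟩ ⊗ ⟨ψ|a⊗b⟩ applied to ψ|`. -/
theorem lambda_pow_four_eq_max_tripleContraction
    (ψ : EuclideanSpace ℂ (Fin dA × Fin dB × Fin dC)) (hψ : ‖ψ‖ = 1) (Λ : ℝ)
    (hΛ : IsGreatest {r : ℝ | ∃ (a : EuclideanSpace ℂ (Fin dA))
        (b : EuclideanSpace ℂ (Fin dB)) (c : EuclideanSpace ℂ (Fin dC)),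
        ‖a‖ = 1 ∧ ‖b‖ = 1 ∧ ‖c‖ = 1 ∧ r = ‖⟪prodVec3 a b c, ψ⟫_ℂ‖} Λ) :
    IsGreatest {r : ℝ | ∃ (a : EuclideanSpace ℂ (Fin dA))
        (b : EuclideanSpace ℂ (Fin dB)) (c : EuclideanSpace ℂ (Fin dC)),
        ‖a‖ = 1 ∧ ‖b‖ = 1 ∧ ‖c‖ = 1 ∧ r = ‖tripleContraction ψ a b c‖}
      (Λ ^ 4) := by
  obtain ⟨⟨a₀, b₀, c₀, ha₀, hb₀, hc₀, hval⟩, hub⟩ := hΛ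
  have hΛ0 : 0 ≤ Λ := hval ▸ norm_nonneg _
  -- Λ > 0
  have hψ0 : ψ ≠ 0 := fun h => by simp [h] at hψ
  have hΛpos : 0 < Λ := by
    obtain ⟨p, hp⟩ : ∃ p, ψ p ≠ 0 := by
      by_contra h; push_neg at h; exact hψ0 (PiLp.ext h)
    obtain ⟨i, j, l⟩ := p
    have hsingle : ⟪prodVec3 (EuclideanSpace.single i (1 : ℂ))
        (EuclideanSpace.single j (1 : ℂ)) (EuclideanSpace.single l (1 : ℂ)), ψ⟫_ℂ
        = ψ (i, j, l) := by
      rw [inner_prodVec3]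
      simp [EuclideanSpace.single_apply, apply_ite conj]
    have hle : ‖ψ (i, j, l)‖ ≤ Λ := by
      refine hub ⟨EuclideanSpace.single i 1, EuclideanSpace.single j 1,
        EuclideanSpace.single l 1, ?_, ?_, ?_, ?_⟩ <;>
        simp [EuclideanSpace.norm_single, hsingle]
    exact lt_of_lt_of_le (norm_pos_iff.mpr hp) hle
  -- generic bound for arbitrary (not necessarily unit) vectors
  have key : ∀ (x : EuclideanSpace ℂ (Fin dA)) (y : EuclideanSpace ℂ (Fin dB))
      (z : EuclideanSpace ℂ (Fin dC)),
      ‖⟪prodVec3 x y z, ψ⟫_ℂ‖ ≤ Λ * (‖x‖ * ‖y‖ * ‖z‖) := by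
    intro x y z
    rcases eq_or_ne x 0 with rfl | hx
    · simp [show prodVec3 (0 : EuclideanSpace ℂ (Fin dA)) y z = 0 from PiLp.ext fun p => by
        simp [prodVec3]]
    rcases eq_or_ne y 0 with rfl | hy
    · simp [show prodVec3 x (0 : EuclideanSpace ℂ (Fin dB)) z = 0 from PiLp.ext fun p => by
        simp [prodVec3]]
    rcases eq_or_ne z 0 with rfl | hz
    · simp [show prodVec3 x y (0 : EuclideanSpace ℂ (Fin dC)) = 0 from PiLp.ext fun p => by
        simp [prodVec3]]
    have hxn : ‖x‖ ≠ 0 := norm_ne_zero_iff.mpr hx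
    have hyn : ‖y‖ ≠ 0 := norm_ne_zero_iff.mpr hy
    have hzn : ‖z‖ ≠ 0 := norm_ne_zero_iff.mpr hz
    set x' : EuclideanSpace ℂ (Fin dA) := (‖x‖⁻¹ : ℂ) • x with hx'
    set y' : EuclideanSpace ℂ (Fin dB) := (‖y‖⁻¹ : ℂ) • y with hy'
    set z' : EuclideanSpace ℂ (Fin dC) := (‖z‖⁻¹ : ℂ) • z with hz'
    have hx'1 : ‖x'‖ = 1 := by
      rw [hx', norm_smul]; simp [norm_inv, hxn]
    have hy'1 : ‖y'‖ = 1 := by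
      rw [hy', norm_smul]; simp [norm_inv, hyn]
    have hz'1 : ‖z'‖ = 1 := by
      rw [hz', norm_smul]; simp [norm_inv, hzn]
    have hb : ‖⟪prodVec3 x' y' z', ψ⟫_ℂ‖ ≤ Λ := hub ⟨x', y', z', hx'1, hy'1, hz'1, rfl⟩
    have hexp : ⟪prodVec3 x y z, ψ⟫_ℂ
        = (‖x‖ * ‖y‖ * ‖z‖ : ℂ) * ⟪prodVec3 x' y' z', ψ⟫_ℂ := by
      have hx0 : (‖x‖ : ℂ) ≠ 0 := Complex.ofReal_ne_zero.mpr hxn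
      have hy0 : (‖y‖ : ℂ) ≠ 0 := Complex.ofReal_ne_zero.mpr hyn
      have hz0 : (‖z‖ : ℂ) ≠ 0 := Complex.ofReal_ne_zero.mpr hzn
      rw [hx', hy', hz', prodVec3_smul₁, prodVec3_smul₂, prodVec3_smul₃,
        inner_smul_left, inner_smul_left, inner_smul_left]
      simp only [map_inv₀, Complex.conj_ofReal]
      field_simp
    rw [hexp, norm_mul]
    have : ‖(‖x‖ * ‖y‖ * ‖z‖ : ℂ)‖ = ‖x‖ * ‖y‖ * ‖z‖ := by
      simp [norm_mul, abs_of_nonneg, norm_nonneg]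
    rw [this, mul_comm]
    exact mul_le_mul_of_nonneg_right hb
      (by positivity)
  -- bound on the partial vectors
  have normA_le : ∀ (b : EuclideanSpace ℂ (Fin dB)) (c : EuclideanSpace ℂ (Fin dC)),
      ‖b‖ = 1 → ‖c‖ = 1 → ‖vecA ψ b c‖ ≤ Λ := by
    intro b c hb hc
    rcases eq_or_ne (vecA ψ b c) 0 with h0 | h0
    · rw [h0]; simpa using hΛ0
    have hn : ‖vecA ψ b c‖ ≠ 0 := norm_ne_zero_iff.mpr h0
    set x' := (‖vecA ψ b c‖⁻¹ : ℂ) • vecA ψ b c with hx'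
    have hx'1 : ‖x'‖ = 1 := by
      rw [hx', norm_smul]; simp [norm_inv, hn]
    have hle : ‖⟪prodVec3 x' b c, ψ⟫_ℂ‖ ≤ Λ :=
      hub ⟨x', b, c, hx'1, hb, hc, rfl⟩
    have heq : ‖⟪prodVec3 x' b c, ψ⟫_ℂ‖ = ‖vecA ψ b c‖ := by
      rw [inner_eq_inner_vecA, hx', inner_smul_left, inner_self_eq_norm_sq_to_K, norm_mul,
        RCLike.norm_conj, norm_inv, norm_pow, Complex.norm_real, Real.norm_eq_abs,
        abs_of_nonneg (norm_nonneg _)]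
      field_simp
      simp
    linarith [heq ▸ hle]
  have normB_le : ∀ (a : EuclideanSpace ℂ (Fin dA)) (c : EuclideanSpace ℂ (Fin dC)),
      ‖a‖ = 1 → ‖c‖ = 1 → ‖vecB ψ a c‖ ≤ Λ := by
    intro a c ha hc
    rcases eq_or_ne (vecB ψ a c) 0 with h0 | h0
    · rw [h0]; simpa using hΛ0
    have hn : ‖vecB ψ a c‖ ≠ 0 := norm_ne_zero_iff.mpr h0
    set x' := (‖vecB ψ a c‖⁻¹ : ℂ) • vecB ψ a c with hx'
    have hx'1 : ‖x'‖ = 1 := by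
      rw [hx', norm_smul]; simp [norm_inv, hn]
    have hle : ‖⟪prodVec3 a x' c, ψ⟫_ℂ‖ ≤ Λ :=
      hub ⟨a, x', c, ha, hx'1, hc, rfl⟩
    have heq : ‖⟪prodVec3 a x' c, ψ⟫_ℂ‖ = ‖vecB ψ a c‖ := by
      rw [inner_eq_inner_vecB, hx', inner_smul_left, inner_self_eq_norm_sq_to_K, norm_mul,
        RCLike.norm_conj, norm_inv, norm_pow, Complex.norm_real, Real.norm_eq_abs,
        abs_of_nonneg (norm_nonneg _)]
      field_simp
      simp
    linarith [heq ▸ hle]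
  have normC_le : ∀ (a : EuclideanSpace ℂ (Fin dA)) (b : EuclideanSpace ℂ (Fin dB)),
      ‖a‖ = 1 → ‖b‖ = 1 → ‖vecC ψ a b‖ ≤ Λ := by
    intro a b ha hb
    rcases eq_or_ne (vecC ψ a b) 0 with h0 | h0
    · rw [h0]; simpa using hΛ0
    have hn : ‖vecC ψ a b‖ ≠ 0 := norm_ne_zero_iff.mpr h0
    set x' := (‖vecC ψ a b‖⁻¹ : ℂ) • vecC ψ a b with hx'
    have hx'1 : ‖x'‖ = 1 := by
      rw [hx', norm_smul]; simp [norm_inv, hn]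
    have hle : ‖⟪prodVec3 a b x', ψ⟫_ℂ‖ ≤ Λ :=
      hub ⟨a, b, x', ha, hb, hx'1, rfl⟩
    have heq : ‖⟪prodVec3 a b x', ψ⟫_ℂ‖ = ‖vecC ψ a b‖ := by
      rw [inner_eq_inner_vecC, hx', inner_smul_left, inner_self_eq_norm_sq_to_K, norm_mul,
        RCLike.norm_conj, norm_inv, norm_pow, Complex.norm_real, Real.norm_eq_abs,
        abs_of_nonneg (norm_nonneg _)]
      field_simp
      simp
    linarith [heq ▸ hle]
  constructor
  · -- membership: the maximizer attains Λ^4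
    refine ⟨a₀, b₀, c₀, ha₀, hb₀, hc₀, ?_⟩
    -- from maximality, vecA ψ b₀ c₀ = r • a₀ with ‖r‖ = Λ, etc.
    have hA : ∃ r : ℂ, ‖r‖ = Λ ∧ vecA ψ b₀ c₀ = r • a₀ := by
      have h1 : Λ = ‖⟪a₀, vecA ψ b₀ c₀⟫_ℂ‖ := by rw [hval, inner_eq_inner_vecA]
      have h2 : ‖⟪a₀, vecA ψ b₀ c₀⟫_ℂ‖ ≤ ‖a₀‖ * ‖vecA ψ b₀ c₀‖ := norm_inner_le_norm _ _
      have h3 : ‖vecA ψ b₀ c₀‖ ≤ Λ := normA_le b₀ c₀ hb₀ hc₀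
      have h4 : ‖vecA ψ b₀ c₀‖ = Λ := le_antisymm h3 (by rw [ha₀, one_mul] at h2; linarith)
      have hA0 : vecA ψ b₀ c₀ ≠ 0 := fun h => by rw [h, norm_zero] at h4; linarith
      have ha0 : a₀ ≠ 0 := fun h => by rw [h, norm_zero] at ha₀; linarith
      have heq : ‖⟪a₀, vecA ψ b₀ c₀⟫_ℂ‖ = ‖a₀‖ * ‖vecA ψ b₀ c₀‖ := by
        rw [ha₀, one_mul, h4, ← h1]
      obtain ⟨r, hr, hra⟩ := (norm_inner_eq_norm_iff ha0 hA0).mp heq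
      exact ⟨r, by
        have := congrArg norm hra; rw [norm_smul, ha₀, mul_one] at this
        rw [← this, h4], hra⟩
    have hB : ∃ r : ℂ, ‖r‖ = Λ ∧ vecB ψ a₀ c₀ = r • b₀ := by
      have h1 : Λ = ‖⟪b₀, vecB ψ a₀ c₀⟫_ℂ‖ := by rw [hval, inner_eq_inner_vecB]
      have h2 : ‖⟪b₀, vecB ψ a₀ c₀⟫_ℂ‖ ≤ ‖b₀‖ * ‖vecB ψ a₀ c₀‖ := norm_inner_le_norm _ _
      have h3 : ‖vecB ψ a₀ c₀‖ ≤ Λ := normB_le a₀ c₀ ha₀ hc₀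
      have h4 : ‖vecB ψ a₀ c₀‖ = Λ := le_antisymm h3 (by rw [hb₀, one_mul] at h2; linarith)
      have hB0 : vecB ψ a₀ c₀ ≠ 0 := fun h => by rw [h, norm_zero] at h4; linarith
      have hb0 : b₀ ≠ 0 := fun h => by rw [h, norm_zero] at hb₀; linarith
      have heq : ‖⟪b₀, vecB ψ a₀ c₀⟫_ℂ‖ = ‖b₀‖ * ‖vecB ψ a₀ c₀‖ := by
        rw [hb₀, one_mul, h4, ← h1]
      obtain ⟨r, hr, hra⟩ := (norm_inner_eq_norm_iff hb0 hB0).mp heq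
      exact ⟨r, by
        have := congrArg norm hra; rw [norm_smul, hb₀, mul_one] at this
        rw [← this, h4], hra⟩
    have hC : ∃ r : ℂ, ‖r‖ = Λ ∧ vecC ψ a₀ b₀ = r • c₀ := by
      have h1 : Λ = ‖⟪c₀, vecC ψ a₀ b₀⟫_ℂ‖ := by rw [hval, inner_eq_inner_vecC]
      have h2 : ‖⟪c₀, vecC ψ a₀ b₀⟫_ℂ‖ ≤ ‖c₀‖ * ‖vecC ψ a₀ b₀‖ := norm_inner_le_norm _ _
      have h3 : ‖vecC ψ a₀ b₀‖ ≤ Λ := normC_le a₀ b₀ ha₀ hb₀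
      have h4 : ‖vecC ψ a₀ b₀‖ = Λ := le_antisymm h3 (by rw [hc₀, one_mul] at h2; linarith)
      have hC0 : vecC ψ a₀ b₀ ≠ 0 := fun h => by rw [h, norm_zero] at h4; linarith
      have hc0 : c₀ ≠ 0 := fun h => by rw [h, norm_zero] at hc₀; linarith
      have heq : ‖⟪c₀, vecC ψ a₀ b₀⟫_ℂ‖ = ‖c₀‖ * ‖vecC ψ a₀ b₀‖ := by
        rw [hc₀, one_mul, h4, ← h1]
      obtain ⟨r, hr, hra⟩ := (norm_inner_eq_norm_iff hc0 hC0).mp heq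
      exact ⟨r, by
        have := congrArg norm hra; rw [norm_smul, hc₀, mul_one] at this
        rw [← this, h4], hra⟩
    obtain ⟨rA, hrA, hAeq⟩ := hA
    obtain ⟨rB, hrB, hBeq⟩ := hB
    obtain ⟨rC, hrC, hCeq⟩ := hC
    rw [tripleContraction_eq, hAeq, hBeq, hCeq, prodVec3_smul₁, prodVec3_smul₂, prodVec3_smul₃,
      inner_smul_left, inner_smul_left, inner_smul_left]
    simp only [norm_mul, RCLike.norm_conj, hrA, hrB, hrC]
    rw [← hval]; ring
  · -- upper bound
    rintro r ⟨a, b, c, ha, hb, hc, rfl⟩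
    rw [tripleContraction_eq]
    calc ‖⟪prodVec3 (vecA ψ b c) (vecB ψ a c) (vecC ψ a b), ψ⟫_ℂ‖
        ≤ Λ * (‖vecA ψ b c‖ * ‖vecB ψ a c‖ * ‖vecC ψ a b‖) := key _ _ _
      _ ≤ Λ * (Λ * Λ * Λ) := by
          refine mul_le_mul_of_nonneg_left ?_ hΛ0
          have h1 := normA_le b c hb hc
          have h2 := normB_le a c ha hc
          have h3 := normC_le a b ha hb
          have n1 := norm_nonneg (vecA ψ b c)
          have n2 := norm_nonneg (vecB ψ a c)
          have n3 := norm_nonneg (vecC ψ a b)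
          exact mul_le_mul (mul_le_mul h1 h2 n2 hΛ0) h3 n3 (by positivity)
      _ = Λ ^ 4 := by ring
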